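/- Let p : [0,∞) → ℝ be C¹ with p(0)=0 and p'>0 on (0,∞), let H be its Helmholtz function, and suppose that ā·p − H is convex on [0,∞) for some ā > 0. Then there exists R̄ > 0 and a constant c > 0 such that for all ϱ > R̄, c·ϱ^(γ−1) ≤ p'(ϱ), where γ = 1 + 1/ā. -/

import Mathlib

/-! With `F = ā p − H`, one has `H' = ∫₁^ϱ p/z² + p/ϱ` and `(H')' = p'/ϱ`. Convexity of `F`
gives `F'(1) ≤ F'(ϱ)` for `ϱ > 1`, i.e. `w ≤ ā p'` where `w = H' + F'(1)`; as `w' = p'/ϱ`, this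
is the differential inequality `w ≤ ā ϱ w'`. Hence `ϱ^(-1/ā) w` is nondecreasing, and
`ā p'(ϱ) ≥ w(ϱ) ≥ w(1) ϱ^(1/ā) = ā p'(1) ϱ^(1/ā)`. -/

open Set MeasureTheory intervalIntegral

lemma hasDerivAt_integral_of_continuousOn {E : Type*} [NormedAddCommGroup E] [NormedSpace ℝ E]
    [CompleteSpace E] {f : ℝ → E} {U : Set ℝ} {a t : ℝ} (hU : IsOpen U)
    (hf : ContinuousOn f U) (hat : uIcc a t ⊆ U) :
    HasDerivAt (fun s => ∫ z in a..s, f z) (f t) t :=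
  integral_hasDerivAt_right (hf.mono hat).intervalIntegrable
    (hf.stronglyMeasurableAtFilter hU t (hat right_mem_uIcc))
    (hf.continuousAt (hU.mem_nhds (hat right_mem_uIcc)))

noncomputable def helmholtz (p : ℝ → ℝ) (ϱ : ℝ) : ℝ :=
  ϱ * ∫ z in (1 : ℝ)..ϱ, p z / z ^ 2

noncomputable def helmholtzDeriv (p : ℝ → ℝ) (ϱ : ℝ) : ℝ :=
  (∫ z in (1 : ℝ)..ϱ, p z / z ^ 2) + p ϱ / ϱ

section Helmholtz

variable {p : ℝ → ℝ} {t : ℝ}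

lemma hasDerivAt_integral_div_sq (hp : ContinuousOn p (Ioi 0)) (ht : 0 < t) :
    HasDerivAt (fun ϱ => ∫ z in (1 : ℝ)..ϱ, p z / z ^ 2) (p t / t ^ 2) t :=
  hasDerivAt_integral_of_continuousOn isOpen_Ioi
    (hp.div (continuousOn_pow 2) fun _ hz => pow_ne_zero 2 (ne_of_gt hz))
    fun _ hz => lt_of_lt_of_le (lt_min one_pos ht) hz.1

lemma hasDerivAt_helmholtz (hp : ContinuousOn p (Ioi 0)) (ht : 0 < t) :
    HasDerivAt (helmholtz p) (helmholtzDeriv p t) t := by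
  refine ((hasDerivAt_id' t).mul (hasDerivAt_integral_div_sq hp ht)).congr_deriv ?_
  rw [helmholtzDeriv]
  field_simp

lemma hasDerivAt_helmholtzDeriv (hpc : ContinuousOn p (Ioi 0)) {p' : ℝ} (hp : HasDerivAt p p' t)
    (ht : 0 < t) : HasDerivAt (helmholtzDeriv p) (p' / t) t := by
  refine ((hasDerivAt_integral_div_sq hpc ht).add
    (hp.div (hasDerivAt_id' t) ht.ne')).congr_deriv ?_
  field_simp
  ring

end Helmholtz

lemma monotoneOn_rpow_neg_mul_of_le_mul_deriv {w w' : ℝ → ℝ} {a r : ℝ} (ha : 0 < a)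
    (hw : ∀ t ∈ Ici a, HasDerivAt w (w' t) t) (hineq : ∀ t ∈ Ioi a, r * w t ≤ t * w' t) :
    MonotoneOn (fun t => t ^ (-r) * w t) (Ici a) := by
  have hderiv : ∀ t ∈ Ici a, HasDerivAt (fun t => t ^ (-r) * w t)
      (-r * t ^ (-r - 1) * w t + t ^ (-r) * w' t) t := fun t ht =>
    (Real.hasDerivAt_rpow_const (Or.inl (ha.trans_le ht).ne')).mul (hw t ht)
  refine monotoneOn_of_hasDerivWithinAt_nonneg (convex_Ici a)
    (fun t ht => (hderiv t ht).continuousAt.continuousWithinAt)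
    (fun t ht => (hderiv t (interior_subset ht)).hasDerivWithinAt) fun t ht => ?_
  rw [interior_Ici] at ht
  have ht0 : 0 < t := ha.trans ht
  have hsplit : t ^ (-r) = t ^ (-r - 1) * t := by
    rw [← Real.rpow_add_one ht0.ne']; ring_nf
  rw [hsplit]
  nlinarith [Real.rpow_pos_of_pos ht0 (-r - 1), hineq t ht]

lemma mul_rpow_le_of_le_mul_deriv {w w' : ℝ → ℝ} {a r t : ℝ} (ha : 0 < a)
    (hw : ∀ t ∈ Ici a, HasDerivAt w (w' t) t) (hineq : ∀ t ∈ Ioi a, r * w t ≤ t * w' t)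
    (hat : a ≤ t) : w a * (t / a) ^ r ≤ w t := by
  have hmono := monotoneOn_rpow_neg_mul_of_le_mul_deriv ha hw hineq self_mem_Ici hat hat
  have ht : 0 < t := ha.trans_le hat
  calc w a * (t / a) ^ r = t ^ r * (a ^ (-r) * w a) := by
        rw [Real.div_rpow ht.le ha.le, Real.rpow_neg ha.le]; ring
    _ ≤ t ^ r * (t ^ (-r) * w t) := mul_le_mul_of_nonneg_left hmono (by positivity)
    _ = w t := by rw [← mul_assoc, ← Real.rpow_add ht, add_neg_cancel, Real.rpow_zero, one_mul]

theorem pressure_growth_from_convexity_general (p H : ℝ → ℝ)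
    (hp : ContDiffOn ℝ 1 p (Set.Ici 0))
    (hp' : ∀ ϱ > (0 : ℝ), 0 < deriv p ϱ)
    (hH : ∀ ϱ : ℝ, H ϱ = ϱ * ∫ z in (1 : ℝ)..ϱ, p z / z ^ 2)
    (abar : ℝ) (habar : 0 < abar)
    (hconv : ConvexOn ℝ (Set.Ici 0) (fun ϱ => abar * p ϱ - H ϱ)) :
    ∃ R > (0 : ℝ), ∃ c > (0 : ℝ), ∀ ϱ > R,
      c * ϱ ^ ((1 + 1 / abar) - 1) ≤ deriv p ϱ := by
  obtain rfl : H = helmholtz p := funext hH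
  have hpd : ∀ t > (0 : ℝ), HasDerivAt p (deriv p t) t := fun t ht =>
    ((hp.differentiableOn one_ne_zero).differentiableAt (Ici_mem_nhds ht)).hasDerivAt
  have hpc : ContinuousOn p (Ioi 0) := hp.continuousOn.mono Ioi_subset_Ici_self
  have hF : ∀ t > (0 : ℝ), HasDerivAt (fun ϱ => abar * p ϱ - helmholtz p ϱ)
      (abar * deriv p t - helmholtzDeriv p t) t := fun t ht =>
    ((hpd t ht).const_mul abar).sub (hasDerivAt_helmholtz hpc ht)
  set w : ℝ → ℝ := fun t => helmholtzDeriv p t + (abar * deriv p 1 - helmholtzDeriv p 1)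
  have hw_le : ∀ t > (1 : ℝ), w t ≤ abar * deriv p t := fun t ht => by
    have h1 : (1 : ℝ) ∈ Ici 0 := mem_Ici.2 zero_le_one
    have ht0 : t ∈ Ici 0 := mem_Ici.2 (zero_le_one.trans ht.le)
    have := (hconv.le_slope_of_hasDerivAt h1 ht0 ht (hF 1 one_pos)).trans
      (hconv.slope_le_of_hasDerivAt h1 ht0 ht (hF t (one_pos.trans ht)))
    linarith
  have hw : ∀ t ∈ Ici (1 : ℝ), HasDerivAt w (deriv p t / t) t := fun t ht =>
    (hasDerivAt_helmholtzDeriv hpc (hpd t (one_pos.trans_le ht)) (one_pos.trans_le ht)).add_const _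
  have hineq : ∀ t ∈ Ioi (1 : ℝ), 1 / abar * w t ≤ t * (deriv p t / t) := fun t ht => by
    rw [mul_div_cancel₀ _ (one_pos.trans ht).ne', one_div, inv_mul_le_iff₀ habar]
    exact hw_le t ht
  refine ⟨1, one_pos, deriv p 1, hp' 1 one_pos, fun t ht => ?_⟩
  have hw1 : w 1 = abar * deriv p 1 := by simp only [w, add_sub_cancel]
  have hbound := (mul_rpow_le_of_le_mul_deriv one_pos hw hineq ht.le).trans (hw_le t ht)
  rw [hw1, div_one, mul_assoc] at hbound
  rw [add_sub_cancel_left]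
  exact le_of_mul_le_mul_left hbound habar

/-- If `ā p − H` is convex on `[0,∞)` for some `ā > 0`, where `H` is the Helmholtz
function of `p`, then `p'(ϱ) ≳ ϱ^(γ−1)` for large `ϱ`, with `γ = 1 + 1/ā`. -/
theorem pressure_growth_from_convexity (p H : ℝ → ℝ)
    (hp : ContDiffOn ℝ 1 p (Set.Ici 0)) (hp0 : p 0 = 0)
    (hp' : ∀ ϱ > (0 : ℝ), 0 < deriv p ϱ)
    (hH : ∀ ϱ : ℝ, H ϱ = ϱ * ∫ z in (1 : ℝ)..ϱ, p z / z ^ 2)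
    (abar : ℝ) (habar : 0 < abar)
    (hconv : ConvexOn ℝ (Set.Ici 0) (fun ϱ => abar * p ϱ - H ϱ)) :
    ∃ R > (0 : ℝ), ∃ c > (0 : ℝ), ∀ ϱ > R,
      c * ϱ ^ ((1 + 1 / abar) - 1) ≤ deriv p ϱ :=
  pressure_growth_from_convexity_general p H hp hp' hH abar habar hconv
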